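/- (Elliptical potential lemma in a Hilbert space) Let V be a real Hilbert space, λ > 0, and g_1,…,g_T ∈ V. Define A_t = λI + Σ_{s=1}^t g_s ⊗ g_s for t = 1,…,T, and let K_T = (⟨g_i, g_j⟩)_{i,j=1}^T ∈ ℝ^{T×T} be the Gram matrix. Then Σ_{t=1}^T ⟨g_t, A_t^{-1} g_t⟩ ≤ log det(I_T + λ^{-1} K_T). -/

import Mathlib

/-
Let `S : ℝᵀ → V`, `S y = ∑ᵢ yᵢ gᵢ`, and let `Dₙ` be the coordinate projection onto the first `n`
indices. Then `⟪gᵢ, S y⟫ = (K y)ᵢ`, so `A_t S = λ S P_t` with `P_t = I + λ⁻¹ D_t K`; hence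
`A_t⁻¹ g_t = λ⁻¹ S P_t⁻¹ e_t` and `⟪g_t, A_t⁻¹ g_t⟫ = λ⁻¹ (K P_t⁻¹)_{tt} =: x_t`.
As `P_{t-1}` is a rank-one perturbation of `P_t`, the matrix determinant lemma gives
`det P_{t-1} = det P_t (1 - x_t)`. Both determinants are positive, because by Sylvester's identity
`det P_t = det (I + λ⁻¹ D_t K D_t)` with `D_t K D_t` positive semidefinite. Therefore
`x_t ≤ -log (1 - x_t) = log det P_t - log det P_{t-1}`, which telescopes to
`log det P_T = log det (I + λ⁻¹ K)`.
-/

open scoped RealInnerProductSpace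

/-- The rank-one operator `a ⊗ a : v ↦ ⟪a, v⟫ • a` on a real inner product space. -/
noncomputable def rankOne {V : Type*} [NormedAddCommGroup V] [InnerProductSpace ℝ V]
    (a : V) : V →L[ℝ] V :=
  (innerSL ℝ a).smulRight a

lemma le_log_sub_log_of_eq_mul_one_sub {a b x : ℝ} (ha : 0 < a) (hb : 0 < b)
    (h : a = b * (1 - x)) : x ≤ Real.log b - Real.log a := by
  have hx : 0 < 1 - x := pos_of_mul_pos_right (h ▸ ha) hb.le
  rw [h, Real.log_mul hb.ne' hx.ne']
  linarith [Real.log_le_sub_one_of_pos hx]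

namespace Matrix

open Real Finset

variable {T : ℕ}

def prefixProj (T n : ℕ) : Matrix (Fin T) (Fin T) ℝ :=
  diagonal fun s => if (s : ℕ) < n then 1 else 0

lemma prefixProj_zero : prefixProj T 0 = 0 := by simp [prefixProj]

lemma prefixProj_self : prefixProj T T = 1 := by simp [prefixProj, ← diagonal_one]

lemma prefixProj_mul_self (n : ℕ) : prefixProj T n * prefixProj T n = prefixProj T n := by
  simp [prefixProj, diagonal_mul_diagonal]

lemma prefixProj_succ (t : Fin T) :
    prefixProj T (t + 1) = prefixProj T t + single t t 1 := by
  rw [prefixProj, prefixProj, ← diagonal_single, diagonal_add]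
  congr 1
  funext s
  rcases eq_or_ne s t with rfl | hst
  · simp
  · have hlt : (s : ℕ) < t + 1 ↔ (s : ℕ) < t := by have := Fin.val_ne_of_ne hst; omega
    simp [hst, hlt]

variable {c : ℝ} {K : Matrix (Fin T) (Fin T) ℝ}

def prefixShift (c : ℝ) (K : Matrix (Fin T) (Fin T) ℝ) (n : ℕ) : Matrix (Fin T) (Fin T) ℝ :=
  1 + c • (prefixProj T n * K)

lemma det_prefixShift_pos (hK : K.PosSemidef) (hc : 0 ≤ c) (n : ℕ) :
    0 < (prefixShift c K n).det := by
  set D := prefixProj T n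
  have hsylvester : (prefixShift c K n).det = (1 + c • (D * K * D)).det := by
    rw [prefixShift, ← prefixProj_mul_self, Matrix.mul_assoc, ← mul_smul_comm,
      det_one_add_mul_comm, Matrix.smul_mul, Matrix.mul_assoc]
  have hDKD : (D * K * D).PosSemidef := by
    simpa [D, prefixProj] using hK.conjTranspose_mul_mul_same D
  rw [hsylvester]
  exact (PosDef.one.add_posSemidef (hDKD.smul hc)).det_pos

lemma det_prefixShift_succ (hK : K.PosSemidef) (hc : 0 ≤ c) (t : Fin T) :
    (prefixShift c K t).det =
      (prefixShift c K (t + 1)).det * (1 - c * (K * (prefixShift c K (t + 1))⁻¹) t t) := by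
  set e : Fin T → ℝ := Pi.single t 1
  have hunit : IsUnit (prefixShift c K (t + 1)).det := (det_prefixShift_pos hK hc _).ne'.isUnit
  have hsingle : c • (single t t 1 * K) =
      -(replicateCol (Fin 1) e * replicateRow (Fin 1) (-c • (e ᵥ* K))) := by
    ext i j
    rcases eq_or_ne i t with rfl | hit
    · rw [Matrix.smul_apply, single_mul_apply_same]
      simp [e, Matrix.mul_apply]
    · rw [Matrix.smul_apply, single_mul_apply_of_ne _ _ _ _ _ hit]
      simp [e, Matrix.mul_apply, hit]
  have hrankOne : prefixShift c K t =
      prefixShift c K (t + 1) + replicateCol (Fin 1) e * replicateRow (Fin 1) (-c • (e ᵥ* K)) := by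
    rw [prefixShift, prefixShift, prefixProj_succ, Matrix.add_mul, smul_add, hsingle]
    abel
  rw [hrankOne]
  refine (det_add_replicateCol_mul_replicateRow hunit e (-c • (e ᵥ* K))).trans (congrArg _ ?_)
  simp [e, det_unique, Matrix.mul_apply, Pi.single_apply, sub_eq_add_neg, Finset.mul_sum, mul_assoc]

theorem sum_le_log_det_one_add_smul (hK : K.PosSemidef) (hc : 0 ≤ c) :
    ∑ t : Fin T, c * (K * (prefixShift c K (t + 1))⁻¹) t t ≤ log (1 + c • K).det := by
  set d : ℕ → ℝ := fun n => (prefixShift c K n).det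
  calc ∑ t : Fin T, c * (K * (prefixShift c K (t + 1))⁻¹) t t
      ≤ ∑ t : Fin T, (log (d (t + 1)) - log (d t)) :=
        sum_le_sum fun t _ => le_log_sub_log_of_eq_mul_one_sub (det_prefixShift_pos hK hc _)
          (det_prefixShift_pos hK hc _) (det_prefixShift_succ hK hc t)
    _ = log (d T) - log (d 0) := by
        rw [Fin.sum_univ_eq_sum_range (fun i => log (d (i + 1)) - log (d i)),
          sum_range_sub (fun i => log (d i))]
    _ = log (1 + c • K).det := by simp [d, prefixShift, prefixProj_self, prefixProj_zero]

end Matrix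

section

open Matrix Finset

variable {V : Type*} [NormedAddCommGroup V] [InnerProductSpace ℝ V]

lemma rankOne_apply (a v : V) : rankOne a v = ⟪a, v⟫ • a := rfl

lemma isUnit_of_coercive [CompleteSpace V] {A : V →L[ℝ] V} {C : ℝ} (hC : 0 < C)
    (hA : ∀ v, C * ‖v‖ * ‖v‖ ≤ ⟪A v, v⟫) : IsUnit A := by
  have hB : IsCoercive ((innerSL ℝ).comp A) := ⟨C, hC, hA⟩
  refine ⟨hB.continuousLinearEquivOfBilin.toUnit, ?_⟩
  ext v
  exact ext_inner_right ℝ fun w => hB.continuousLinearEquivOfBilin_apply v w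

lemma isUnit_smul_one_add_sum_rankOne [CompleteSpace V] {lam : ℝ} (hlam : 0 < lam) {ι : Type*}
    (s : Finset ι) (g : ι → V) : IsUnit (lam • (1 : V →L[ℝ] V) + ∑ i ∈ s, rankOne (g i)) := by
  refine isUnit_of_coercive hlam fun v => ?_
  have hsum : ⟪(∑ i ∈ s, rankOne (g i)) v, v⟫ = ∑ i ∈ s, ⟪g i, v⟫ ^ 2 := by
    simp [_root_.sum_apply, sum_inner, rankOne_apply, real_inner_smul_left, sq]
  rw [_root_.add_apply, inner_add_left, hsum, _root_.smul_apply, one_apply_eq_self,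
    real_inner_smul_left, real_inner_self_eq_norm_mul_norm, mul_assoc]
  exact le_add_of_nonneg_right (sum_nonneg fun i _ => sq_nonneg _)

lemma inner_fintypeLinearCombination {ι : Type*} [Fintype ι] (g : ι → V) (y : ι → ℝ) (i : ι) :
    ⟪g i, Fintype.linearCombination ℝ g y⟫ = (gram ℝ g *ᵥ y) i := by
  simp [Fintype.linearCombination_apply, inner_sum, real_inner_smul_right, mulVec, dotProduct,
    mul_comm]

variable {T : ℕ}

lemma sum_rankOne_apply_fintypeLinearCombination (g : Fin T → V) (t : Fin T) (y : Fin T → ℝ) :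
    (∑ s ∈ Iic t, rankOne (g s)) (Fintype.linearCombination ℝ g y) =
      Fintype.linearCombination ℝ g ((prefixProj T (t + 1) * gram ℝ g) *ᵥ y) := by
  simp only [_root_.sum_apply, rankOne_apply, inner_fintypeLinearCombination]
  rw [Fintype.linearCombination_apply, ← mulVec_mulVec, prefixProj]
  simp only [mulVec_diagonal, ite_mul, one_mul, zero_mul, ite_smul, zero_smul]
  rw [← Finset.sum_filter]
  exact sum_congr (by ext; simp) fun _ _ => rfl

lemma smul_one_add_sum_rankOne_apply_fintypeLinearCombination {lam : ℝ} (hlam : lam ≠ 0)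
    (g : Fin T → V) (t : Fin T) (y : Fin T → ℝ) :
    (lam • (1 : V →L[ℝ] V) + ∑ s ∈ Iic t, rankOne (g s)) (Fintype.linearCombination ℝ g y) =
      lam • Fintype.linearCombination ℝ g (prefixShift lam⁻¹ (gram ℝ g) (t + 1) *ᵥ y) := by
  rw [_root_.add_apply, _root_.smul_apply, one_apply_eq_self,
    sum_rankOne_apply_fintypeLinearCombination, prefixShift, add_mulVec, one_mulVec, smul_mulVec,
    map_add, map_smul, smul_add, smul_smul, mul_inv_cancel₀ hlam, one_smul]

theorem inner_inverse_smul_one_add_sum_rankOne [CompleteSpace V] {lam : ℝ} (hlam : 0 < lam)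
    (g : Fin T → V) (t : Fin T) :
    ⟪g t, Ring.inverse (lam • (1 : V →L[ℝ] V) + ∑ s ∈ Iic t, rankOne (g s)) (g t)⟫ =
      lam⁻¹ * (gram ℝ g * (prefixShift lam⁻¹ (gram ℝ g) (t + 1))⁻¹) t t := by
  set A := lam • (1 : V →L[ℝ] V) + ∑ s ∈ Iic t, rankOne (g s)
  set P := prefixShift lam⁻¹ (gram ℝ g) (t + 1)
  set y := lam⁻¹ • (P⁻¹ *ᵥ Pi.single t 1)
  have hP : IsUnit P.det :=
    (det_prefixShift_pos (posSemidef_gram ℝ g) (inv_nonneg.2 hlam.le) _).ne'.isUnit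
  have hy : A (Fintype.linearCombination ℝ g y) = g t := by
    rw [smul_one_add_sum_rankOne_apply_fintypeLinearCombination hlam.ne', mulVec_smul,
      mulVec_mulVec, mul_nonsing_inv _ hP, one_mulVec, map_smul, smul_smul,
      mul_inv_cancel₀ hlam.ne', one_smul, Fintype.linearCombination_apply_single, one_smul]
  have hinv : Ring.inverse A (g t) = Fintype.linearCombination ℝ g y := by
    rw [← hy]
    change (Ring.inverse A * A) _ = _
    rw [Ring.inverse_mul_cancel _ (isUnit_smul_one_add_sum_rankOne hlam _ g)]
    rfl
  rw [hinv, inner_fintypeLinearCombination, mulVec_smul, mulVec_mulVec, Pi.smul_apply,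
    smul_eq_mul, mulVec_single_one, col_apply]

end

/-- Elliptical potential lemma in a Hilbert space: with `A_t = λI + Σ_{s≤t} g_s ⊗ g_s`
and Gram matrix `K_T = (⟪g_i, g_j⟫)`, we have
`Σ_t ⟪g_t, A_t⁻¹ g_t⟫ ≤ log det (I_T + λ⁻¹ K_T)`. -/
theorem elliptical_potential_lemma
    {V : Type*} [NormedAddCommGroup V] [InnerProductSpace ℝ V] [CompleteSpace V]
    (T : ℕ) (lam : ℝ) (hlam : 0 < lam)
    (g : Fin T → V) (A : Fin T → (V →L[ℝ] V))
    (hA : ∀ t, A t = lam • (1 : V →L[ℝ] V) + ∑ s ∈ Finset.Iic t, rankOne (g s))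
    (K : Matrix (Fin T) (Fin T) ℝ)
    (hK : ∀ i j, K i j = ⟪g i, g j⟫) :
    ∑ t, ⟪g t, (Ring.inverse (A t)) (g t)⟫ ≤ Real.log (1 + lam⁻¹ • K).det := by
  obtain rfl : K = Matrix.gram ℝ g := Matrix.ext hK
  simp_rw [hA, inner_inverse_smul_one_add_sum_rankOne hlam]
  exact Matrix.sum_le_log_det_one_add_smul (Matrix.posSemidef_gram ℝ g) (inv_nonneg.2 hlam.le)
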